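/- Let θ be a primitive substitution of constant length r on 𝒜, with f defined from fixed data M_0, k_0, j_0, f_0 as in the context. Then for all a, b ∈ 𝒜, lim_{k→∞} d*(θ^k(a), θ^k(b)) = 0 if and only if f((θ^k)_j(a)) = f((θ^k)_j(b)) for every k ≥ 0 and every j < r^k. -/

import Mathlib

open scoped Classical

noncomputable section

/-- The product topology on `ℤ → A`, where the alphabet `A` carries the discrete topology. -/
abbrev seqTop (A : Type*) : TopologicalSpace (ℤ → A) :=
  @Pi.topologicalSpace ℤ (fun _ => A) (fun _ => ⊥)

/-- The left shift map `σ`. -/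
def shiftMap {A : Type*} (x : ℤ → A) : ℤ → A := fun n => x (n + 1)

/-- The shift by `m` steps, i.e. `σ ^ m`. -/
def shiftBy {A : Type*} (m : ℤ) (x : ℤ → A) : ℤ → A := fun n => x (n + m)

/-- The coordinatewise extension of a letter-to-letter map. -/
def codeMap {A B : Type*} (τ : A → B) : (ℤ → A) → (ℤ → B) := fun x n => τ (x n)

/-- The closure of the two-sided shift orbit of `x`. -/
def orbitClosure {A : Type*} (x : ℤ → A) : Set (ℤ → A) :=
  @closure _ (seqTop A) (Set.range fun m : ℤ => shiftBy m x)

/-- A subshift: a nonempty, closed, shift-invariant subset of `ℤ → A`. -/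
def IsSubshift {A : Type*} (X : Set (ℤ → A)) : Prop :=
  X.Nonempty ∧ @IsClosed _ (seqTop A) X ∧ shiftMap '' X = X

/-- A minimal subshift: every orbit is dense. -/
def IsMinimalSubshift {A : Type*} (X : Set (ℤ → A)) : Prop :=
  IsSubshift X ∧ ∀ x ∈ X, X ⊆ orbitClosure x

/-- `substPow θ r k a j` is the `(j+1)`-st letter of `θ^k(a)`, meaningful for `j < r ^ k`. -/
def substPow {A : Type*} (θ : A → ℕ → A) (r : ℕ) : ℕ → A → ℕ → A
  | 0, a, _ => a
  | k + 1, a, j => θ (substPow θ r k a (j / r)) (j % r)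

/-- A substitution of constant length `r` is primitive if for some `k ≥ 1` every letter
occurs in every `θ^k(a)`. -/
def SubstPrimitive {A : Type*} (θ : A → ℕ → A) (r : ℕ) : Prop :=
  ∃ k, 1 ≤ k ∧ ∀ a a' : A, ∃ j < r ^ k, substPow θ r k a j = a'

/-- The action of `θ^k` on bi-infinite sequences, with the image of `x₀` beginning at
coordinate `0`. -/
def substActPow {A : Type*} (θ : A → ℕ → A) (r k : ℕ) (x : ℤ → A) : ℤ → A :=
  fun n => substPow θ r k (x (Int.fdiv n (r ^ k))) ((Int.fmod n (r ^ k)).toNat)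

/-- A bi-infinite `θ`-periodic point. -/
def IsSubstPeriodicPt {A : Type*} (θ : A → ℕ → A) (r : ℕ) (x : ℤ → A) : Prop :=
  ∃ j, 1 ≤ j ∧ substActPow θ r j x = x

/-- `X` is the substitution shift `X_θ`: the orbit closure of a bi-infinite `θ`-periodic
point. -/
def IsSubstShift {A : Type*} (θ : A → ℕ → A) (r : ℕ) (X : Set (ℤ → A)) : Prop :=
  ∃ x : ℤ → A, IsSubstPeriodicPt θ r x ∧ X = orbitClosure x

/-- An automorphism of the subshift `X`: a self-homeomorphism of `X` commuting with the
shift. -/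
def IsAut {A : Type*} (X : Set (ℤ → A)) (Φ : (ℤ → A) → (ℤ → A)) : Prop :=
  Set.BijOn Φ X X ∧ @ContinuousOn _ _ (seqTop A) (seqTop A) Φ X ∧
    (∀ x ∈ X, Φ (shiftMap x) = shiftMap (Φ x)) ∧
    ∃ Ψ : (ℤ → A) → (ℤ → A), Set.MapsTo Ψ X X ∧
      @ContinuousOn _ _ (seqTop A) (seqTop A) Ψ X ∧ ∀ x ∈ X, Ψ (Φ x) = x

/-- A topological conjugacy between the subshifts `X` and `Y`. -/
def IsConjugacy {A B : Type*} (X : Set (ℤ → A)) (Y : Set (ℤ → B))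
    (h : (ℤ → A) → (ℤ → B)) : Prop :=
  Set.BijOn h X Y ∧ @ContinuousOn _ _ (seqTop A) (seqTop B) h X ∧
    (∀ x ∈ X, h (shiftMap x) = shiftMap (h x)) ∧
    ∃ g : (ℤ → B) → (ℤ → A), Set.MapsTo g Y X ∧
      @ContinuousOn _ _ (seqTop B) (seqTop A) g Y ∧ ∀ x ∈ X, g (h x) = x

/-- `X` and `Y` are topologically conjugate subshifts. -/
def TopConjugate {A B : Type*} (X : Set (ℤ → A)) (Y : Set (ℤ → B)) : Prop :=
  ∃ h, IsConjugacy X Y h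

/-- `(P, σ^n)` is a minimal system: `P` is nonempty, `σ^n`-invariant (in both directions)
and every `σ^n`-orbit is dense in `P`. -/
def MinimalUnderPow {A : Type*} (n : ℕ) (P : Set (ℤ → A)) : Prop :=
  P.Nonempty ∧ (∀ y ∈ P, ∀ m : ℤ, shiftBy ((n : ℤ) * m) y ∈ P) ∧
    ∀ y ∈ P, P ⊆ @closure _ (seqTop A) (Set.range fun m : ℤ => shiftBy ((n : ℤ) * m) y)

/-- A cyclic `σ^n`-minimal partition of `X` with `m` members. -/
def IsCyclicMinPartition {A : Type*} (X : Set (ℤ → A)) (n m : ℕ)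
    (P : ZMod m → Set (ℤ → A)) : Prop :=
  0 < m ∧ (∀ i, @IsClosed _ (seqTop A) (P i)) ∧
    (Pairwise fun i j => Disjoint (P i) (P j)) ∧ (⋃ i, P i) = X ∧
    (∀ i, shiftMap '' P i = P (i + 1)) ∧ ∀ i, MinimalUnderPow n (P i)

/-- `Φ` has `κ`-value zero: it fixes each member of every cyclic `σ^n`-minimal
partition of `X`. -/
def KappaZero {A : Type*} (X : Set (ℤ → A)) (Φ : (ℤ → A) → (ℤ → A)) : Prop :=
  ∀ n : ℕ, 1 ≤ n → ∀ m : ℕ, ∀ P : ZMod m → Set (ℤ → A),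
    IsCyclicMinPartition X n m P → ∀ i, Φ '' P i = P i

/-- `(a, b)` is a periodic pair for `θ`. -/
def IsPeriodicPair {A : Type*} (θ : A → ℕ → A) (r : ℕ) (a b : A) : Prop :=
  a ≠ b ∧ ∃ p, 1 ≤ p ∧ ∃ j < r ^ p, substPow θ r p a j = a ∧ substPow θ r p b j = b

/-- The least period `p(a,b)` of a periodic pair. -/
def pairPeriod {A : Type*} (θ : A → ℕ → A) (r : ℕ) (a b : A) : ℕ :=
  sInf {p | 1 ≤ p ∧ ∃ j < r ^ p, substPow θ r p a j = a ∧ substPow θ r p b j = b}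

/-- `p(θ)`: the least common multiple of the periods of the periodic pairs of `θ`
(equal to `1` if there are none). -/
def substPairLcm {A : Type*} [Fintype A] (θ : A → ℕ → A) (r : ℕ) : ℕ :=
  Finset.univ.lcm fun ab : A × A =>
    if IsPeriodicPair θ r ab.1 ab.2 then pairPeriod θ r ab.1 ab.2 else 1

/-- `θ` is pair-aperiodic: every periodic pair has period `1`. -/
def PairAperiodic {A : Type*} (θ : A → ℕ → A) (r : ℕ) : Prop :=
  ∀ a b : A, IsPeriodicPair θ r a b → ∃ j < r, θ a j = a ∧ θ b j = b

/-- `(c, d)` is `k`-reachable from `(a, b)`. -/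
def PairReachable {A : Type*} (θ : A → ℕ → A) (r k : ℕ) (a b c d : A) : Prop :=
  ∃ j < r ^ k, substPow θ r k a j = c ∧ substPow θ r k b j = d

/-- `(a, b)` is an asymptotic disjoint pair. -/
def AsympDisjointPair {A : Type*} (θ : A → ℕ → A) (r : ℕ) (a b : A) : Prop :=
  ∀ k, 1 ≤ k → ∃ j < r ^ k, substPow θ r k a j ≠ substPow θ r k b j

/-- A right-infinite fixed point of `θ`. -/
def IsRightFixed {A : Type*} (θ : A → ℕ → A) (r : ℕ) (u : ℕ → A) : Prop :=
  ∀ n : ℕ, θ (u (n / r)) (n % r) = u n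

/-- A left-infinite fixed point of `θ` (only coordinates `< 0` are meaningful). -/
def IsLeftFixed {A : Type*} (θ : A → ℕ → A) (r : ℕ) (v : ℤ → A) : Prop :=
  ∀ m : ℤ, m < 0 → θ (v (Int.fdiv m r)) ((Int.fmod m r).toNat) = v m

/-- `θ` is injective: distinct letters have distinct images. -/
def SubstInjective {A : Type*} (θ : A → ℕ → A) (r : ℕ) : Prop :=
  ∀ a b : A, (∀ j < r, θ a j = θ b j) → a = b

/-- `θ` is strongly injective: injective, no two distinct right-infinite fixed points agree
on all coordinates `n ≥ 1`, and no two distinct left-infinite fixed points agree on all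
coordinates `n ≤ -2`. -/
def StronglyInjective {A : Type*} (θ : A → ℕ → A) (r : ℕ) : Prop :=
  SubstInjective θ r ∧
    (∀ u u' : ℕ → A, IsRightFixed θ r u → IsRightFixed θ r u' →
      (∀ n, 1 ≤ n → u n = u' n) → u = u') ∧
    (∀ v v' : ℤ → A, IsLeftFixed θ r v → IsLeftFixed θ r v' →
      (∀ m : ℤ, m ≤ -2 → v m = v' m) → ∀ m : ℤ, m < 0 → v m = v' m)

/-- `θ` has height one. -/
def HeightOne {A : Type*} (θ : A → ℕ → A) (r : ℕ) : Prop :=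
  ∀ u : ℕ → A, IsRightFixed θ r u →
    ∀ n, 1 ≤ n → Nat.Coprime n r → (∀ a, 1 ≤ a → u a = u 0 → n ∣ a) → n = 1

/-- The column number `c(θ)`. -/
def columnNumber {A : Type*} [Fintype A] (θ : A → ℕ → A) (r : ℕ) : ℕ :=
  sInf {c | ∃ k, 1 ≤ k ∧ ∃ j < r ^ k,
    c = (Set.range fun a : A => substPow θ r k a j).ncard}

/-- A minimal set for `θ`: a column image of cardinality `c(θ)`. -/
def IsMinimalSet {A : Type*} [Fintype A] (θ : A → ℕ → A) (r : ℕ) (M : Set A) : Prop :=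
  M.ncard = columnNumber θ r ∧
    ∃ k, 1 ≤ k ∧ ∃ j < r ^ k, M = Set.range fun a : A => substPow θ r k a j

/-- `d*(θ^k(a), θ^k(b))`: the proportion of coordinates where `θ^k(a)` and `θ^k(b)`
disagree. -/
def dStar {A : Type*} (θ : A → ℕ → A) (r k : ℕ) (a b : A) : ℝ :=
  (((Finset.range (r ^ k)).filter
      fun j => substPow θ r k a j ≠ substPow θ r k b j).card : ℝ) / ((r : ℝ) ^ k)

/-- `θ` is reduced: for no pair of distinct letters does `d*(θ^k(a), θ^k(b))` tend to `0`. -/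
def SubstReduced {A : Type*} (θ : A → ℕ → A) (r : ℕ) : Prop :=
  ∀ a b : A, a ≠ b →
    ¬ Filter.Tendsto (fun k => dStar θ r k a b) Filter.atTop (nhds (0 : ℝ))

/-- `ι : C → (ℕ → B)` presents `C` as the alphabet of `k`-blocks of the fixed point `u`
of `η`, and `ηk` as the `k`-compression `η^{(k)}` of `η`. -/
def IsCompression {B C : Type*} (η : B → ℕ → B) (r k : ℕ) (u : ℕ → B)
    (ι : C → ℕ → B) (ηk : C → ℕ → C) : Prop :=
  IsRightFixed η r u ∧
    (∀ c c' : C, (∀ j < k, ι c j = ι c' j) → c = c') ∧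
    (∀ c : C, ∃ m : ℕ, ∀ j < k, ι c j = u (m * k + j)) ∧
    (∀ m : ℕ, ∃ c : C, ∀ j < k, ι c j = u (m * k + j)) ∧
    (∀ c : C, ∀ i < r, ∀ j < k,
      ι (ηk c i) j = η (ι c ((i * k + j) / r)) ((i * k + j) % r))

/-- The `τ`-twist of a substitution: `(θ_τ(α))_j = τ^j(θ(α)_j)`. -/
def twistSubst {C : Type*} (θ : C → ℕ → C) (τ : C → C) : C → ℕ → C :=
  fun c j => τ^[j] (θ c j)

end


lemma substPow_add' {A : Type*} (θ : A → ℕ → A) (r k : ℕ) (m : ℕ) (a : A) (J : ℕ) :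
    substPow θ r (k + m) a J = substPow θ r m (substPow θ r k a (J / r ^ m)) (J % r ^ m) := by
  induction m generalizing J with
  | zero => simp [substPow]
  | succ m ih =>
    show substPow θ r (k + m + 1) a J = _
    rw [substPow, ih, substPow]
    have h1 : J / r / r ^ m = J / r ^ (m + 1) := by
      rw [Nat.div_div_eq_div_mul, ← pow_succ']
    have h2 : (J % r ^ (m + 1)) / r = J / r % r ^ m := by
      rw [pow_succ', Nat.mod_mul_right_div_self]
    have h3 : (J % r ^ (m + 1)) % r = J % r := Nat.mod_mod_of_dvd J (dvd_pow_self r (Nat.succ_ne_zero m))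
    rw [h1, h2, h3]

/-- Number of differing columns of `θ^(k+m)` is at most `(r^m) * (number at level k)`. -/
lemma diffCard_add_le {A : Type*} (θ : A → ℕ → A) (r : ℕ) (hr : 0 < r)
    (a b : A) (k m : ℕ) :
    ((Finset.range (r ^ (k + m))).filter
        fun J => substPow θ r (k + m) a J ≠ substPow θ r (k + m) b J).card ≤
      ((Finset.range (r ^ k)).filter
        fun j => substPow θ r k a j ≠ substPow θ r k b j).card * r ^ m := by
  have hrm : 0 < r ^ m := Nat.pow_pos hr
  have := Finset.card_le_card_of_injOn (f := fun J => (J / r ^ m, J % r ^ m))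
    (s := (Finset.range (r ^ (k + m))).filter
        fun J => substPow θ r (k + m) a J ≠ substPow θ r (k + m) b J)
    (t := ((Finset.range (r ^ k)).filter
        fun j => substPow θ r k a j ≠ substPow θ r k b j) ×ˢ Finset.range (r ^ m))
    (by
      intro J hJ
      simp only [Finset.mem_coe, Finset.mem_filter, Finset.mem_range] at hJ
      simp only [Finset.mem_coe, Finset.mem_product, Finset.mem_filter, Finset.mem_range]
      have hdiv : J / r ^ m < r ^ k := by
        apply Nat.div_lt_of_lt_mul
        calc J < r ^ (k + m) := hJ.1
          _ = r ^ m * r ^ k := by rw [pow_add, mul_comm]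
      refine ⟨⟨hdiv, ?_⟩, Nat.mod_lt _ hrm⟩
      intro heq
      exact hJ.2 (by rw [substPow_add', substPow_add', heq])
    )
    (by
      intro J1 _ J2 _ h
      have h1 : J1 / r ^ m = J2 / r ^ m := congrArg Prod.fst h
      have h2 : J1 % r ^ m = J2 % r ^ m := congrArg Prod.snd h
      calc J1 = r ^ m * (J1 / r ^ m) + J1 % r ^ m := (Nat.div_add_mod J1 (r ^ m)).symm
        _ = r ^ m * (J2 / r ^ m) + J2 % r ^ m := by rw [h1, h2]
        _ = J2 := Nat.div_add_mod J2 (r ^ m))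
  simpa [Finset.card_product] using this

/-- If columns at position `j0` of level `m` always agree, the count contracts by `r^m - 1`. -/
lemma diffCard_add_le_sub {A : Type*} (θ : A → ℕ → A) (r : ℕ) (hr : 0 < r)
    (a b : A) (k m j0 : ℕ) (hj0 : j0 < r ^ m)
    (H : ∀ j < r ^ k, substPow θ r m (substPow θ r k a j) j0
        = substPow θ r m (substPow θ r k b j) j0) :
    ((Finset.range (r ^ (k + m))).filter
        fun J => substPow θ r (k + m) a J ≠ substPow θ r (k + m) b J).card ≤
      ((Finset.range (r ^ k)).filter
        fun j => substPow θ r k a j ≠ substPow θ r k b j).card * (r ^ m - 1) := by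
  have hrm : 0 < r ^ m := Nat.pow_pos hr
  have := Finset.card_le_card_of_injOn (f := fun J => (J / r ^ m, J % r ^ m))
    (s := (Finset.range (r ^ (k + m))).filter
        fun J => substPow θ r (k + m) a J ≠ substPow θ r (k + m) b J)
    (t := ((Finset.range (r ^ k)).filter
        fun j => substPow θ r k a j ≠ substPow θ r k b j) ×ˢ (Finset.range (r ^ m)).erase j0)
    (by
      intro J hJ
      simp only [Finset.mem_coe, Finset.mem_filter, Finset.mem_range] at hJ
      simp only [Finset.mem_coe, Finset.mem_product, Finset.mem_filter, Finset.mem_range, Finset.mem_erase]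
      have hdiv : J / r ^ m < r ^ k := by
        apply Nat.div_lt_of_lt_mul
        calc J < r ^ (k + m) := hJ.1
          _ = r ^ m * r ^ k := by rw [pow_add, mul_comm]
      have hdiff : substPow θ r m (substPow θ r k a (J / r ^ m)) (J % r ^ m)
          ≠ substPow θ r m (substPow θ r k b (J / r ^ m)) (J % r ^ m) := by
        intro heq
        exact hJ.2 (by rw [substPow_add', substPow_add', heq])
      refine ⟨⟨hdiv, fun heq => hdiff (by rw [heq])⟩, ⟨?_, Nat.mod_lt _ hrm⟩⟩
      intro heq
      exact hdiff (by rw [heq]; exact H _ hdiv)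
    )
    (by
      intro J1 _ J2 _ h
      have h1 : J1 / r ^ m = J2 / r ^ m := congrArg Prod.fst h
      have h2 : J1 % r ^ m = J2 % r ^ m := congrArg Prod.snd h
      calc J1 = r ^ m * (J1 / r ^ m) + J1 % r ^ m := (Nat.div_add_mod J1 (r ^ m)).symm
        _ = r ^ m * (J2 / r ^ m) + J2 % r ^ m := by rw [h1, h2]
        _ = J2 := Nat.div_add_mod J2 (r ^ m))
  calc _ ≤ _ := this
  _ = _ := by
      rw [Finset.card_product, Finset.card_erase_of_mem (Finset.mem_range.2 hj0),
        Finset.card_range]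

/-- `d*(θ^k(a), θ^k(b)) → 0` iff `f((θ^k)_j(a)) = f((θ^k)_j(b))` for all
`k ≥ 0` and `j < r^k`, where `f a = f0 ((θ^{k0})_{j0} a)`. -/
theorem stmt_14 {A : Type*} [Fintype A]
    (θ : A → ℕ → A) (r : ℕ) (hr : 2 ≤ r) (hprim : SubstPrimitive θ r)
    (c : ℕ) (hc : c = columnNumber θ r)
    (M0 : Set A) (k0 j0 : ℕ) (hM0 : IsMinimalSet θ r M0) (hk0 : 1 ≤ k0)
    (hj0 : j0 < r ^ k0) (hM0eq : (Set.range fun a : A => substPow θ r k0 a j0) = M0)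
    (hfix : ∀ a ∈ M0, substPow θ r k0 a j0 = a)
    (f0 : A → Fin c) (hf0 : Set.BijOn f0 M0 Set.univ)
    (a b : A) :
    Filter.Tendsto (fun k => dStar θ r k a b) Filter.atTop (nhds (0 : ℝ)) ↔
      ∀ k j : ℕ, j < r ^ k →
        f0 (substPow θ r k0 (substPow θ r k a j) j0) =
          f0 (substPow θ r k0 (substPow θ r k b j) j0) := by
  have hr0 : 0 < r := by omega
  have hrR : (1:ℝ) < (r:ℝ) := by exact_mod_cast hr
  have hrRpos : (0:ℝ) < (r:ℝ) := by linarith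
  have hpmem : ∀ x : A, substPow θ r k0 x j0 ∈ M0 := fun x => hM0eq ▸ ⟨x, rfl⟩
  -- columns of θ^m are injective on M0
  have colinj : ∀ (m i : ℕ), i < r ^ m → Set.InjOn (fun x => substPow θ r m x i) M0 := by
    intro m i hi
    have hrm : 0 < r ^ m := Nat.pow_pos hr0
    have hJdiv : (r ^ m * j0 + i) / r ^ m = j0 := by
      rw [Nat.mul_add_div hrm, Nat.div_eq_of_lt hi, add_zero]
    have hJmod : (r ^ m * j0 + i) % r ^ m = i := by
      rw [Nat.mul_add_mod, Nat.mod_eq_of_lt hi]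
    have hcol : ∀ x : A, substPow θ r (k0 + m) x (r ^ m * j0 + i)
        = substPow θ r m (substPow θ r k0 x j0) i := by
      intro x; rw [substPow_add', hJdiv, hJmod]
    have hS : (Set.range fun x : A => substPow θ r (k0 + m) x (r ^ m * j0 + i))
        = (fun x => substPow θ r m x i) '' M0 := by
      rw [← hM0eq]
      ext y
      constructor
      · rintro ⟨x, rfl⟩
        exact ⟨substPow θ r k0 x j0, ⟨x, rfl⟩, (hcol x).symm⟩
      · rintro ⟨z, ⟨x, rfl⟩, rfl⟩
        exact ⟨x, hcol x⟩
    have hJlt : r ^ m * j0 + i < r ^ (k0 + m) := by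
      have h1 : r ^ m * j0 + i < r ^ m * (j0 + 1) := by
        rw [Nat.mul_succ]; omega
      have h2 : r ^ m * (j0 + 1) ≤ r ^ m * r ^ k0 :=
        Nat.mul_le_mul_left _ hj0
      have h3 : r ^ m * r ^ k0 = r ^ (k0 + m) := by
        rw [pow_add, mul_comm]
      omega
    have hle1 : columnNumber θ r ≤ ((fun x => substPow θ r m x i) '' M0).ncard := by
      apply Nat.sInf_le
      exact ⟨k0 + m, by omega, r ^ m * j0 + i, hJlt, by rw [hS]⟩
    have hle2 : ((fun x => substPow θ r m x i) '' M0).ncard ≤ M0.ncard :=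
      Set.ncard_image_le M0.toFinite
    have heq : ((fun x => substPow θ r m x i) '' M0).ncard = M0.ncard := by
      have := hM0.1
      omega
    exact Set.injOn_of_ncard_image_eq heq M0.toFinite
  constructor
  · -- tendsto → columns agree
    intro htend k j hj
    by_contra hne
    set x' := substPow θ r k0 (substPow θ r k a j) j0 with hx'
    set y' := substPow θ r k0 (substPow θ r k b j) j0 with hy'
    have hxy : x' ≠ y' := fun h => hne (congrArg f0 h)
    have hrk0pos : 0 < r ^ k0 := Nat.pow_pos hr0
    have hJ0div : (r ^ k0 * j + j0) / r ^ k0 = j := by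
      rw [Nat.mul_add_div hrk0pos, Nat.div_eq_of_lt hj0, add_zero]
    have hJ0mod : (r ^ k0 * j + j0) % r ^ k0 = j0 := by
      rw [Nat.mul_add_mod, Nat.mod_eq_of_lt hj0]
    have hxa : substPow θ r (k + k0) a (r ^ k0 * j + j0) = x' := by
      rw [substPow_add', hJ0div, hJ0mod]
    have hxb : substPow θ r (k + k0) b (r ^ k0 * j + j0) = y' := by
      rw [substPow_add', hJ0div, hJ0mod]
    have hJ0lt : r ^ k0 * j + j0 < r ^ (k + k0) := by
      have h1 : r ^ k0 * j + j0 < r ^ k0 * (j + 1) := by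
        rw [Nat.mul_succ]; omega
      have h2 : r ^ k0 * (j + 1) ≤ r ^ k0 * r ^ k := Nat.mul_le_mul_left _ hj
      have h3 : r ^ k0 * r ^ k = r ^ (k + k0) := by rw [pow_add, mul_comm]
      omega
    set ε : ℝ := ((r:ℝ) ^ (k + k0))⁻¹ with hε
    have hεpos : 0 < ε := by positivity
    have hev := htend.eventually_lt_const hεpos
    rw [Filter.eventually_atTop] at hev
    obtain ⟨N, hN⟩ := hev
    have hrNpos : 0 < r ^ N := Nat.pow_pos hr0
    have hcard : r ^ N ≤ ((Finset.range (r ^ (k + k0 + N))).filter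
        fun J => substPow θ r (k + k0 + N) a J ≠ substPow θ r (k + k0 + N) b J).card := by
      have hmaps : ∀ i ∈ Finset.range (r ^ N),
          r ^ N * (r ^ k0 * j + j0) + i ∈ (Finset.range (r ^ (k + k0 + N))).filter
            fun J => substPow θ r (k + k0 + N) a J ≠ substPow θ r (k + k0 + N) b J := by
        intro i hi
        rw [Finset.mem_range] at hi
        have hdiv : (r ^ N * (r ^ k0 * j + j0) + i) / r ^ N = r ^ k0 * j + j0 := by
          rw [Nat.mul_add_div hrNpos, Nat.div_eq_of_lt hi, add_zero]
        have hmod : (r ^ N * (r ^ k0 * j + j0) + i) % r ^ N = i := by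
          rw [Nat.mul_add_mod, Nat.mod_eq_of_lt hi]
        have hlt : r ^ N * (r ^ k0 * j + j0) + i < r ^ (k + k0 + N) := by
          have h1 : r ^ N * (r ^ k0 * j + j0) + i < r ^ N * (r ^ k0 * j + j0 + 1) := by
            rw [Nat.mul_succ]; omega
          have h2 : r ^ N * (r ^ k0 * j + j0 + 1) ≤ r ^ N * r ^ (k + k0) :=
            Nat.mul_le_mul_left _ hJ0lt
          have h3 : r ^ N * r ^ (k + k0) = r ^ (k + k0 + N) := by
            rw [pow_add]; ring
          omega
        rw [Finset.mem_filter, Finset.mem_range]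
        refine ⟨hlt, ?_⟩
        have hA : substPow θ r (k + k0 + N) a (r ^ N * (r ^ k0 * j + j0) + i)
            = substPow θ r N x' i := by
          rw [substPow_add', hdiv, hmod, hxa]
        have hB : substPow θ r (k + k0 + N) b (r ^ N * (r ^ k0 * j + j0) + i)
            = substPow θ r N y' i := by
          rw [substPow_add', hdiv, hmod, hxb]
        rw [hA, hB]
        intro heq
        exact hxy (colinj N i hi (hpmem _) (hpmem _) heq)
      have := Finset.card_le_card_of_injOn (fun i => r ^ N * (r ^ k0 * j + j0) + i)
        hmaps (fun i1 _ i2 _ h => Nat.add_left_cancel h)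
      simpa using this
    have hlow : ε ≤ dStar θ r (k + k0 + N) a b := by
      have hεeq : ε = ((r:ℝ) ^ N) / ((r:ℝ) ^ (k + k0 + N)) := by
        rw [hε, pow_add]
        field_simp
        ring
      rw [hεeq, dStar]
      gcongr
      exact_mod_cast hcard
    exact absurd hlow (not_le.2 (hN _ (by omega)))
  · -- columns agree → tendsto
    intro H
    have H' : ∀ (k : ℕ), ∀ j < r ^ k, substPow θ r k0 (substPow θ r k a j) j0
        = substPow θ r k0 (substPow θ r k b j) j0 := by
      intro k j hj
      exact hf0.injOn (hpmem _) (hpmem _) (H k j hj)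
    set D : ℕ → ℕ := fun k => ((Finset.range (r ^ k)).filter
        fun j => substPow θ r k a j ≠ substPow θ r k b j).card with hD
    have hdstar : ∀ k, dStar θ r k a b = (D k : ℝ) / (r:ℝ) ^ k := fun k => rfl
    have hrk0R : (0:ℝ) < (r:ℝ) ^ k0 := by positivity
    have hone : (1:ℝ) ≤ (r:ℝ) ^ k0 := by exact_mod_cast Nat.one_le_pow k0 r hr0
    set q : ℝ := ((r:ℝ) ^ k0 - 1) / (r:ℝ) ^ k0 with hq
    have hq0 : 0 ≤ q := div_nonneg (by linarith) hrk0R.le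
    have hq1 : q < 1 := (div_lt_one hrk0R).2 (by linarith)
    have hmono : ∀ k m, dStar θ r (k + m) a b ≤ dStar θ r k a b := by
      intro k m
      rw [hdstar, hdstar]
      have h := diffCard_add_le θ r hr0 a b k m
      have hcast : (D (k + m) : ℝ) ≤ (D k : ℝ) * (r:ℝ) ^ m := by
        exact_mod_cast h
      calc (D (k + m) : ℝ) / (r:ℝ) ^ (k + m)
          ≤ ((D k : ℝ) * (r:ℝ) ^ m) / (r:ℝ) ^ (k + m) := by gcongr
        _ = (D k : ℝ) / (r:ℝ) ^ k := by
            rw [pow_add, mul_div_mul_right _ _ (by positivity : ((r:ℝ) ^ m) ≠ 0)]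
    have hcontr : ∀ m, dStar θ r (m * k0 + k0) a b ≤ q * dStar θ r (m * k0) a b := by
      intro m
      have h := diffCard_add_le_sub θ r hr0 a b (m * k0) k0 j0 hj0
        (fun j hj => H' (m * k0) j hj)
      have honeN : (1:ℕ) ≤ r ^ k0 := Nat.one_le_pow _ _ hr0
      have hcast : (D (m * k0 + k0) : ℝ) ≤ (D (m * k0) : ℝ) * ((r:ℝ) ^ k0 - 1) := by
        have := h
        have hc : ((r ^ k0 - 1 : ℕ) : ℝ) = (r:ℝ) ^ k0 - 1 := by
          push_cast [Nat.cast_sub honeN]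
          ring
        calc (D (m * k0 + k0) : ℝ) ≤ ((D (m * k0) * (r ^ k0 - 1) : ℕ) : ℝ) := by
              exact_mod_cast this
          _ = (D (m * k0) : ℝ) * ((r:ℝ) ^ k0 - 1) := by rw [Nat.cast_mul, hc]
      rw [hdstar, hdstar]
      calc (D (m * k0 + k0) : ℝ) / (r:ℝ) ^ (m * k0 + k0)
          ≤ ((D (m * k0) : ℝ) * ((r:ℝ) ^ k0 - 1)) / (r:ℝ) ^ (m * k0 + k0) := by gcongr
        _ = q * ((D (m * k0) : ℝ) / (r:ℝ) ^ (m * k0)) := by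
            rw [pow_add, hq]
            field_simp
    have hclaim : ∀ m, dStar θ r (m * k0) a b ≤ q ^ m := by
      intro m
      induction m with
      | zero =>
        have hD0 : D 0 ≤ 1 := by
          calc D 0 ≤ (Finset.range (r ^ 0)).card := Finset.card_filter_le _ _
            _ = 1 := by simp
        rw [Nat.zero_mul, hdstar, pow_zero, pow_zero, div_one]
        exact_mod_cast hD0
      | succ m ih =>
        have : (m + 1) * k0 = m * k0 + k0 := by ring
        rw [this, pow_succ, mul_comm (q ^ m) q]
        calc dStar θ r (m * k0 + k0) a b ≤ q * dStar θ r (m * k0) a b := hcontr m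
          _ ≤ q * q ^ m := by
              apply mul_le_mul_of_nonneg_left ih hq0
    have hk0pos : 0 < k0 := hk0
    have hbound : ∀ k, dStar θ r k a b ≤ q ^ (k / k0) := by
      intro k
      have h1 : (k / k0) * k0 ≤ k := Nat.div_mul_le_self k k0
      have h2 : (k / k0) * k0 + (k - (k / k0) * k0) = k := by omega
      calc dStar θ r k a b
          = dStar θ r ((k / k0) * k0 + (k - (k / k0) * k0)) a b := by rw [h2]
        _ ≤ dStar θ r ((k / k0) * k0) a b := hmono _ _
        _ ≤ q ^ (k / k0) := hclaim _
    have hnonneg : ∀ k, 0 ≤ dStar θ r k a b := by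
      intro k
      rw [hdstar]
      positivity
    have hdivtend : Filter.Tendsto (fun k : ℕ => k / k0) Filter.atTop Filter.atTop :=
      Filter.tendsto_atTop_atTop.2 fun bnd =>
        ⟨bnd * k0, fun k hk => (Nat.le_div_iff_mul_le hk0pos).2 hk⟩
    have hpowtend : Filter.Tendsto (fun k : ℕ => q ^ (k / k0)) Filter.atTop (nhds 0) :=
      (tendsto_pow_atTop_nhds_zero_of_lt_one hq0 hq1).comp hdivtend
    exact squeeze_zero hnonneg hbound hpowtend
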